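/- Let ψ : ℝ → ℝ be twice continuously differentiable on (0,∞) with ψ''(t) > 0 for all t > 0 and ψ'' monotonically decreasing on (0,∞). Let N ≥ 1, let n_1, …, n_N ≥ 2, let v = (v^1, …, v^N) with each v^j ∈ Υ^{n_j}_+, and let d_x and d_s be block vectors satisfying Σ_j ⟨d_x^j, d_s^j⟩ = 0 and d_x^j + d_s^j = −ψ'(v^j) for every j. Define f_1(α) = Σ_j [(1/2)Ψ(v^j + α d_x^j) + (1/2)Ψ(v^j + α d_s^j)] − Ψ(v). Let α ≥ 0 satisfy λ_min(v) − 2√2·α·δ(v) > 0, assume that for every ξ ∈ [0, α] and every j with n_j ≥ 3 the tail vectors of v^j + ξ d_x^j and of v^j + ξ d_s^j are nonzero, and assume that −ψ'(λ_min(v) − 2√2·α·δ(v)) + ψ'(λ_min(v)) ≤ 2√2·δ(v). Then f_1 is differentiable at α and f_1'(α) ≤ 0. -/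

import Mathlib

noncomputable section

open Real Finset

/-- Euclidean dot product of two vectors in `ℝ^n`. -/
def dotp {n : ℕ} (x y : Fin n → ℝ) : ℝ := ∑ i, x i * y i

/-- Euclidean norm of a vector in `ℝ^n`. -/
def enorm {n : ℕ} (x : Fin n → ℝ) : ℝ := Real.sqrt (∑ i, (x i) ^ 2)

/-- The tail `x̄ = (x_3, …, x_n)` of a vector, embedded back into `ℝ^n`
(first two coordinates replaced by `0`). Indices are 0-based, so the tail
consists of the coordinates with index `≥ 2`. -/
def tl {n : ℕ} (x : Fin (n + 2) → ℝ) : Fin (n + 2) → ℝ :=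
  fun i => if 2 ≤ (i : ℕ) then x i else 0

/-- The eigenvalue `λ1(x) = x_1 - x_2`. -/
def lam1 {n : ℕ} (x : Fin (n + 2) → ℝ) : ℝ := x 0 - x 1

/-- The eigenvalue `λ2(x) = x_1 + x_2 - √2 ‖x̄‖`. -/
def lam2 {n : ℕ} (x : Fin (n + 2) → ℝ) : ℝ := x 0 + x 1 - Real.sqrt 2 * _root_.enorm (tl x)

/-- The eigenvalue `λ4(x) = x_1 + x_2 + √2 ‖x̄‖`. -/
def lam4 {n : ℕ} (x : Fin (n + 2) → ℝ) : ℝ := x 0 + x 1 + Real.sqrt 2 * _root_.enorm (tl x)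

/-- The Jordan-type product `x ◇ s`. -/
def diam {n : ℕ} (x s : Fin (n + 2) → ℝ) : Fin (n + 2) → ℝ :=
  fun i =>
    if (i : ℕ) = 0 then dotp x s
    else if (i : ℕ) = 1 then x 1 * s 0 + x 0 * s 1 + dotp (tl x) (tl s)
    else (s 0 + s 1) * x i + (x 0 + x 1) * s i

/-- The trace `Tr(x) = 2 x_1`. -/
def trace {n : ℕ} (x : Fin (n + 2) → ℝ) : ℝ := 2 * x 0

/-- `det̄(x) = (x_1 + x_2)² - 2 ‖x̄‖²`. -/
def detbar {n : ℕ} (x : Fin (n + 2) → ℝ) : ℝ := (x 0 + x 1) ^ 2 - 2 * (_root_.enorm (tl x)) ^ 2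

/-- `det(x) = x_1² + x_2² - ‖x̄‖²`. -/
def det2 {n : ℕ} (x : Fin (n + 2) → ℝ) : ℝ := (x 0) ^ 2 + (x 1) ^ 2 - (_root_.enorm (tl x)) ^ 2

/-- `det_(x) = 2 x_1 x_2 - ‖x̄‖²`. -/
def detund {n : ℕ} (x : Fin (n + 2) → ℝ) : ℝ := 2 * x 0 * x 1 - (_root_.enorm (tl x)) ^ 2

/-- Membership in the type-2 second order cone `Υ^n`. -/
def inCone {n : ℕ} (x : Fin (n + 2) → ℝ) : Prop := 0 ≤ lam1 x ∧ 0 ≤ lam2 x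

/-- Membership in the interior `Υ^n_+` of the type-2 second order cone. -/
def inConeInt {n : ℕ} (x : Fin (n + 2) → ℝ) : Prop := 0 < lam1 x ∧ 0 < lam2 x

/-- The unit element `e = (1, 0, …, 0)`. -/
def eVec {n : ℕ} : Fin (n + 2) → ℝ := fun i => if (i : ℕ) = 0 then 1 else 0

/-- The spectral vector `g(x) = g(λ1(x)) v1 + g(λ2(x)) v2 + g(λ4(x)) v4`.
Its tail entries are `(g(λ4(x)) - g(λ2(x))) xᵢ / (2√2 ‖x̄‖)` when `x̄ ≠ 0`;
when `x̄ = 0` the written formula evaluates to `0` automatically since then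
`xᵢ = 0` for `i ≥ 2`. -/
def specVec {n : ℕ} (g : ℝ → ℝ) (x : Fin (n + 2) → ℝ) : Fin (n + 2) → ℝ :=
  fun i =>
    if (i : ℕ) = 0 then (1 / 2) * g (lam1 x) + (1 / 4) * g (lam2 x) + (1 / 4) * g (lam4 x)
    else if (i : ℕ) = 1 then -(1 / 2) * g (lam1 x) + (1 / 4) * g (lam2 x) + (1 / 4) * g (lam4 x)
    else (g (lam4 x) - g (lam2 x)) * x i / (2 * Real.sqrt 2 * _root_.enorm (tl x))

/-- The barrier value `Ψ(x) = ψ(λ1(x)) + ½ψ(λ2(x)) + ½ψ(λ4(x))`. -/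
def Psi {n : ℕ} (g : ℝ → ℝ) (x : Fin (n + 2) → ℝ) : ℝ :=
  g (lam1 x) + (1 / 2) * g (lam2 x) + (1 / 2) * g (lam4 x)

/-- The barrier value of a block vector. -/
def PsiBlk {N : ℕ} {nf : Fin N → ℕ} (g : ℝ → ℝ) (v : ∀ j, Fin (nf j + 2) → ℝ) : ℝ :=
  ∑ j, Psi g (v j)

/-- The norm-based proximity `δ(v) = (1/√2) (Σⱼ ‖ψ'(vʲ)‖²)^{1/2}`. -/
def deltaBlk {N : ℕ} {nf : Fin N → ℕ} (g : ℝ → ℝ) (v : ∀ j, Fin (nf j + 2) → ℝ) : ℝ :=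
  (1 / Real.sqrt 2) * Real.sqrt (∑ j, (_root_.enorm (specVec g (v j))) ^ 2)

/-- `λ_min(v) = minⱼ min{λ1(vʲ), λ2(vʲ)}`. -/
def lamMin {N : ℕ} {nf : Fin N → ℕ} (v : ∀ j, Fin (nf j + 2) → ℝ) : ℝ :=
  ⨅ j, min (lam1 (v j)) (lam2 (v j))

-- helper lemmas, stage 1

/-! ### auxiliary definitions -/

def r2v {n : ℕ} (d : Fin (n + 2) → ℝ) : ℝ := ∑ i, (tl d i) ^ 2

def tQ {n : ℕ} (x d : Fin (n + 2) → ℝ) (t : ℝ) : ℝ := ∑ i, (tl x i + t * tl d i) ^ 2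

def tR {n : ℕ} (x d : Fin (n + 2) → ℝ) (t : ℝ) : ℝ := ∑ i, (tl x i + t * tl d i) * tl d i

def hpf {n : ℕ} (x d : Fin (n + 2) → ℝ) (t : ℝ) : ℝ := tR x d t / Real.sqrt (tQ x d t)

def Dfun (g : ℝ → ℝ) {n : ℕ} (x d : Fin (n + 2) → ℝ) (t : ℝ) : ℝ :=
  g (lam1 (x + t • d)) * (d 0 - d 1)
  + (1 / 2) * g (lam2 (x + t • d)) * ((d 0 + d 1) - Real.sqrt 2 * hpf x d t)
  + (1 / 2) * g (lam4 (x + t • d)) * ((d 0 + d 1) + Real.sqrt 2 * hpf x d t)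

/-! ### basic lemmas -/

lemma tl_line {n : ℕ} (x d : Fin (n + 2) → ℝ) (t : ℝ) :
    tl (x + t • d) = fun i => tl x i + t * tl d i := by
  funext i
  simp only [tl, Pi.add_apply, Pi.smul_apply, smul_eq_mul]
  split <;> simp

lemma tl_add {n : ℕ} (x y : Fin (n + 2) → ℝ) : tl (x + y) = tl x + tl y := by
  funext i
  simp only [tl, Pi.add_apply]
  split <;> simp

lemma tl_neg {n : ℕ} (x : Fin (n + 2) → ℝ) : tl (-x) = -(tl x) := by
  funext i
  simp only [tl, Pi.neg_apply]
  split <;> simp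

lemma enorm_tl_line {n : ℕ} (x d : Fin (n + 2) → ℝ) (t : ℝ) :
    _root_.enorm (tl (x + t • d)) = Real.sqrt (tQ x d t) := by
  rw [tl_line]; rfl

lemma lam1_line {n : ℕ} (x d : Fin (n + 2) → ℝ) (t : ℝ) :
    lam1 (x + t • d) = (x 0 - x 1) + t * (d 0 - d 1) := by
  simp only [lam1, Pi.add_apply, Pi.smul_apply, smul_eq_mul]; ring

lemma lam2_line {n : ℕ} (x d : Fin (n + 2) → ℝ) (t : ℝ) :
    lam2 (x + t • d) = ((x 0 + x 1) + t * (d 0 + d 1)) - Real.sqrt 2 * Real.sqrt (tQ x d t) := by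
  simp only [lam2, Pi.add_apply, Pi.smul_apply, smul_eq_mul, enorm_tl_line]; ring

lemma lam4_line {n : ℕ} (x d : Fin (n + 2) → ℝ) (t : ℝ) :
    lam4 (x + t • d) = ((x 0 + x 1) + t * (d 0 + d 1)) + Real.sqrt 2 * Real.sqrt (tQ x d t) := by
  simp only [lam4, Pi.add_apply, Pi.smul_apply, smul_eq_mul, enorm_tl_line]; ring

lemma tQ_nonneg {n : ℕ} (x d : Fin (n + 2) → ℝ) (t : ℝ) : 0 ≤ tQ x d t :=
  Finset.sum_nonneg fun _ _ => sq_nonneg _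

lemma tQ_pos_of_ne {n : ℕ} (x d : Fin (n + 2) → ℝ) (t : ℝ)
    (h : tl (x + t • d) ≠ 0) : 0 < tQ x d t := by
  rcases Function.ne_iff.mp h with ⟨i, hi⟩
  rw [tl_line] at hi
  have h1 : 0 < (tl x i + t * tl d i) ^ 2 := by
    have : tl x i + t * tl d i ≠ 0 := by simpa using hi
    positivity
  calc (0:ℝ) < (tl x i + t * tl d i) ^ 2 := h1
    _ ≤ tQ x d t := by
      unfold tQ
      exact Finset.single_le_sum (f := fun i : Fin (n+2) => (tl x i + t * tl d i) ^ 2)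
        (fun j _ => sq_nonneg _) (Finset.mem_univ i)

lemma tl_zero_of_base {n : ℕ} (hn : n = 0) (x : Fin (n + 2) → ℝ) : tl x = 0 := by
  subst hn
  funext i
  have := i.isLt
  simp only [tl, Pi.zero_apply]
  rw [if_neg (by omega)]

/-- splitting a sum of products into head and tail parts -/
lemma sum_split {n : ℕ} (u w : Fin (n + 2) → ℝ) :
    ∑ i, u i * w i = u 0 * w 0 + u 1 * w 1 + ∑ i, tl u i * tl w i := by
  rw [Fin.sum_univ_succ (f := fun i => u i * w i), Fin.sum_univ_succ,
    Fin.sum_univ_succ (f := fun i => tl u i * tl w i), Fin.sum_univ_succ]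
  have h0 : tl u 0 * tl w 0 = 0 := by simp [tl]
  have h1 : tl u (0 : Fin (n+1)).succ * tl w (0 : Fin (n+1)).succ = 0 := by
    simp [tl, Fin.val_succ]
  have h2 : ∀ i : Fin n, tl u i.succ.succ * tl w i.succ.succ = u i.succ.succ * w i.succ.succ := by
    intro i
    have : 2 ≤ (i.succ.succ : ℕ) := by simp [Fin.val_succ]
    simp [tl, this]
  rw [h0, h1, Finset.sum_congr rfl (fun i _ => h2 i)]
  have e1 : ((0 : Fin (n+1)).succ : Fin (n+2)) = 1 := by
    simp [Fin.ext_iff, Fin.val_succ]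
  rw [e1]
  ring

lemma sum_sq_split {n : ℕ} (d : Fin (n + 2) → ℝ) :
    ∑ i, d i ^ 2 = d 0 ^ 2 + d 1 ^ 2 + r2v d := by
  have := sum_split d d
  simp only [← pow_two] at this
  simpa [r2v, pow_two] using this

lemma le_of_sq_le' (A B : ℝ) (hA : 0 ≤ A) (h : B ^ 2 ≤ A ^ 2) : B ≤ A := by
  calc B ≤ |B| := le_abs_self B
    _ = Real.sqrt (B ^ 2) := (Real.sqrt_sq_eq_abs B).symm
    _ ≤ Real.sqrt (A ^ 2) := Real.sqrt_le_sqrt h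
    _ = A := Real.sqrt_sq hA

theorem stmt_test : True := trivial
/-! ### derivatives of tQ, tR, sqrt tQ, hpf -/

lemma hasDerivAt_tR {n : ℕ} (x d : Fin (n + 2) → ℝ) (t : ℝ) :
    HasDerivAt (tR x d) (r2v d) t := by
  have : ∀ i : Fin (n+2), HasDerivAt (fun s => (tl x i + s * tl d i) * tl d i)
      ((tl d i) ^ 2) t := by
    intro i
    have h1 : HasDerivAt (fun s : ℝ => tl x i + s * tl d i) (tl d i) t := by
      simpa using ((hasDerivAt_id t).mul_const (tl d i)).const_add (tl x i)
    simpa [pow_two] using h1.mul_const (tl d i)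
  have h := HasDerivAt.fun_sum (fun i (_ : i ∈ Finset.univ) => this i)
  exact h

lemma hasDerivAt_tQ {n : ℕ} (x d : Fin (n + 2) → ℝ) (t : ℝ) :
    HasDerivAt (tQ x d) (2 * tR x d t) t := by
  have : ∀ i : Fin (n+2), HasDerivAt (fun s => (tl x i + s * tl d i) ^ 2)
      (2 * ((tl x i + t * tl d i) * tl d i)) t := by
    intro i
    have h1 : HasDerivAt (fun s : ℝ => tl x i + s * tl d i) (tl d i) t := by
      simpa using ((hasDerivAt_id t).mul_const (tl d i)).const_add (tl x i)
    have := h1.fun_pow 2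
    refine this.congr_deriv ?_
    ring
  have h := HasDerivAt.fun_sum (fun i (_ : i ∈ Finset.univ) => this i)
  have e : ∑ i : Fin (n+2), 2 * ((tl x i + t * tl d i) * tl d i) = 2 * tR x d t := by
    rw [tR, Finset.mul_sum]
  rw [e] at h
  exact h

lemma hasDerivAt_sqrt_tQ {n : ℕ} (x d : Fin (n + 2) → ℝ) (t : ℝ) (h : tQ x d t ≠ 0) :
    HasDerivAt (fun s => Real.sqrt (tQ x d s)) (hpf x d t) t := by
  have hQpos : 0 < tQ x d t := lt_of_le_of_ne (tQ_nonneg x d t) (Ne.symm h)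
  have hKne : Real.sqrt (tQ x d t) ≠ 0 := by
    rw [Real.sqrt_ne_zero']; exact hQpos
  have := (hasDerivAt_tQ x d t).sqrt h
  convert this using 1
  rw [hpf]
  field_simp

lemma tR_sq_le {n : ℕ} (x d : Fin (n + 2) → ℝ) (t : ℝ) :
    (tR x d t) ^ 2 ≤ tQ x d t * r2v d := by
  simpa [tR, tQ, r2v] using
    Finset.sum_mul_sq_le_sq_mul_sq Finset.univ (fun i => tl x i + t * tl d i) (fun i => tl d i)

lemma hpf_sq_le {n : ℕ} (x d : Fin (n + 2) → ℝ) (t : ℝ) :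
    (hpf x d t) ^ 2 ≤ r2v d := by
  rcases eq_or_lt_of_le (tQ_nonneg x d t) with h | h
  · have hs : Real.sqrt (tQ x d t) = 0 := by rw [← h, Real.sqrt_zero]
    have : hpf x d t = 0 := by rw [hpf, hs, div_zero]
    rw [this]
    simpa [r2v] using Finset.sum_nonneg (fun i _ => sq_nonneg (tl d i))
  · have hs : Real.sqrt (tQ x d t) ^ 2 = tQ x d t := Real.sq_sqrt (le_of_lt h)
    have hspos : 0 < Real.sqrt (tQ x d t) := Real.sqrt_pos.mpr h
    rw [hpf, div_pow, hs, div_le_iff₀ h]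
    calc (tR x d t)^2 ≤ tQ x d t * r2v d := tR_sq_le x d t
      _ = r2v d * tQ x d t := by ring

lemma hasDerivAt_hpf {n : ℕ} (x d : Fin (n + 2) → ℝ) (t : ℝ) (h : tQ x d t ≠ 0) :
    HasDerivAt (hpf x d) ((r2v d - (hpf x d t) ^ 2) / Real.sqrt (tQ x d t)) t := by
  have hQpos : 0 < tQ x d t := lt_of_le_of_ne (tQ_nonneg x d t) (Ne.symm h)
  have hK : 0 < Real.sqrt (tQ x d t) := Real.sqrt_pos.mpr hQpos
  have hKne : Real.sqrt (tQ x d t) ≠ 0 := ne_of_gt hK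
  have hdiv := (hasDerivAt_tR x d t).div (hasDerivAt_sqrt_tQ x d t h) hKne
  have : (r2v d * Real.sqrt (tQ x d t) - tR x d t * hpf x d t) / Real.sqrt (tQ x d t) ^ 2
      = (r2v d - (hpf x d t) ^ 2) / Real.sqrt (tQ x d t) := by
    rw [hpf]
    have h2 : Real.sqrt (tQ x d t) * Real.sqrt (tQ x d t) = tQ x d t :=
      Real.mul_self_sqrt hQpos.le
    field_simp
  rw [this] at hdiv
  exact hdiv

/-- unified provider of the sqrt/hpf derivative data -/
lemma sqrtQ_data {n : ℕ} (x d : Fin (n + 2) → ℝ) (t : ℝ)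
    (hc : tl (x + t • d) ≠ 0 ∨ (tl x = 0 ∧ tl d = 0)) :
    HasDerivAt (fun s => Real.sqrt (tQ x d s)) (hpf x d t) t ∧
    ∃ hpd, HasDerivAt (hpf x d) hpd t ∧
      hpd * Real.sqrt (tQ x d t) = r2v d - (hpf x d t) ^ 2 ∧ 0 ≤ hpd := by
  rcases hc with hne | ⟨hx0, hd0⟩
  · have hQ : tQ x d t ≠ 0 := ne_of_gt (tQ_pos_of_ne x d t hne)
    have hK : 0 < Real.sqrt (tQ x d t) :=
      Real.sqrt_pos.mpr (lt_of_le_of_ne (tQ_nonneg x d t) (Ne.symm hQ))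
    refine ⟨hasDerivAt_sqrt_tQ x d t hQ, (r2v d - (hpf x d t) ^ 2) / Real.sqrt (tQ x d t),
      hasDerivAt_hpf x d t hQ, ?_, ?_⟩
    · field_simp
    · apply div_nonneg _ (le_of_lt hK)
      have := hpf_sq_le x d t
      linarith
  · have hQz : ∀ s, tQ x d s = 0 := by
      intro s
      rw [tQ]
      apply Finset.sum_eq_zero
      intro i _
      simp [hx0, hd0]
    have hRz : ∀ s, tR x d s = 0 := by
      intro s
      rw [tR]
      apply Finset.sum_eq_zero
      intro i _
      simp [hx0, hd0]
    have hpz : hpf x d = fun _ => 0 := by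
      funext s
      rw [hpf, hRz, zero_div]
    have hr2 : r2v d = 0 := by
      rw [r2v]
      apply Finset.sum_eq_zero
      intro i _
      simp [hd0]
    constructor
    · have : (fun s => Real.sqrt (tQ x d s)) = fun _ => (0:ℝ) := by
        funext s; rw [hQz, Real.sqrt_zero]
      rw [this, hpz]
      simpa using hasDerivAt_const t (0:ℝ)
    · refine ⟨0, ?_, ?_, le_refl 0⟩
      · rw [hpz]; exact hasDerivAt_const t (0:ℝ)
      · rw [hpz, hr2]; simp
/-! ### eigenvalue lower bounds along a line -/

lemma tQ_expand {n : ℕ} (x d : Fin (n + 2) → ℝ) (t : ℝ) :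
    tQ x d t = tQ x d 0 + 2 * t * tR x d 0 + t ^ 2 * r2v d := by
  rw [tQ, tQ, tR, r2v, Finset.mul_sum, Finset.mul_sum, ← Finset.sum_add_distrib,
    ← Finset.sum_add_distrib]
  apply Finset.sum_congr rfl
  intro i _
  ring

lemma sqrt_tQ_triangle {n : ℕ} (x d : Fin (n + 2) → ℝ) (t : ℝ) (ht : 0 ≤ t) :
    Real.sqrt (tQ x d t) ≤ Real.sqrt (tQ x d 0) + t * Real.sqrt (r2v d) := by
  have hr2 : (0:ℝ) ≤ r2v d := Finset.sum_nonneg fun _ _ => sq_nonneg _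
  have hQ0 : (0:ℝ) ≤ tQ x d 0 := tQ_nonneg x d 0
  have hK0 : (0:ℝ) ≤ Real.sqrt (tQ x d 0) := Real.sqrt_nonneg _
  have hu : (0:ℝ) ≤ Real.sqrt (r2v d) := Real.sqrt_nonneg _
  apply le_of_sq_le' _ _ (by positivity)
  rw [Real.sq_sqrt (tQ_nonneg x d t), tQ_expand]
  have hR0 : tR x d 0 ≤ Real.sqrt (tQ x d 0) * Real.sqrt (r2v d) := by
    apply le_of_sq_le' _ _ (by positivity)
    rw [mul_pow, Real.sq_sqrt hQ0, Real.sq_sqrt hr2]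
    exact tR_sq_le x d 0
  have e0 : Real.sqrt (tQ x d 0) ^ 2 = tQ x d 0 := Real.sq_sqrt hQ0
  have e1 : Real.sqrt (r2v d) ^ 2 = r2v d := Real.sq_sqrt hr2
  nlinarith [mul_le_mul_of_nonneg_left hR0 (by linarith : (0:ℝ) ≤ 2 * t)]

lemma head_tail_bound {n : ℕ} (d : Fin (n + 2) → ℝ) :
    Real.sqrt 2 * Real.sqrt (r2v d) - (d 0 + d 1) ≤ 2 * Real.sqrt (∑ i, d i ^ 2) := by
  have hr2 : (0:ℝ) ≤ r2v d := Finset.sum_nonneg fun _ _ => sq_nonneg _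
  set u := Real.sqrt (r2v d) with hu
  set E := Real.sqrt (∑ i, d i ^ 2) with hE
  have hu0 : 0 ≤ u := Real.sqrt_nonneg _
  have hE0 : 0 ≤ E := Real.sqrt_nonneg _
  have hu2 : u ^ 2 = r2v d := Real.sq_sqrt hr2
  have hE2 : E ^ 2 = ∑ i, d i ^ 2 := Real.sq_sqrt (Finset.sum_nonneg fun _ _ => sq_nonneg _)
  have hsplit := sum_sq_split d
  have h2 : Real.sqrt 2 ^ 2 = 2 := Real.sq_sqrt (by norm_num)
  apply le_of_sq_le' _ _ (by positivity)
  nlinarith [sq_nonneg (Real.sqrt 2 * u + (d 0 + d 1)), sq_nonneg (d 0 - d 1),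
    sq_nonneg (d 0 + d 1)]

lemma abs_head_bound {n : ℕ} (d : Fin (n + 2) → ℝ) :
    -(2 * Real.sqrt (∑ i, d i ^ 2)) ≤ d 0 - d 1 := by
  have hE2 : Real.sqrt (∑ i, d i ^ 2) ^ 2 = ∑ i, d i ^ 2 :=
    Real.sq_sqrt (Finset.sum_nonneg fun _ _ => sq_nonneg _)
  have hE0 : 0 ≤ Real.sqrt (∑ i, d i ^ 2) := Real.sqrt_nonneg _
  have hsplit := sum_sq_split d
  have hr2 : (0:ℝ) ≤ r2v d := Finset.sum_nonneg fun _ _ => sq_nonneg _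
  have := le_of_sq_le' (2 * Real.sqrt (∑ i, d i ^ 2)) (-(d 0 - d 1)) (by positivity)
    (by nlinarith [sq_nonneg (d 0 + d 1)])
  linarith

lemma lam1_lower {n : ℕ} (x d : Fin (n + 2) → ℝ) (t : ℝ) (ht : 0 ≤ t) :
    lam1 x - 2 * t * Real.sqrt (∑ i, d i ^ 2) ≤ lam1 (x + t • d) := by
  rw [lam1_line]
  have h := abs_head_bound d
  have := mul_le_mul_of_nonneg_left h ht
  have hEq : lam1 x = x 0 - x 1 := rfl
  nlinarith

lemma lam2_lower {n : ℕ} (x d : Fin (n + 2) → ℝ) (t : ℝ) (ht : 0 ≤ t) :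
    lam2 x - 2 * t * Real.sqrt (∑ i, d i ^ 2) ≤ lam2 (x + t • d) := by
  rw [lam2_line]
  have hEq : lam2 x = x 0 + x 1 - Real.sqrt 2 * Real.sqrt (tQ x d 0) := by
    rw [lam2]
    congr 2
    rw [_root_.enorm]
    congr 1
    apply Finset.sum_congr rfl
    intro i _
    simp [tQ]
  rw [hEq]
  have htri := sqrt_tQ_triangle x d t ht
  have hhead := head_tail_bound d
  have h2 : 0 ≤ Real.sqrt 2 := Real.sqrt_nonneg 2
  have h3 := mul_le_mul_of_nonneg_left htri h2
  have h4 := mul_le_mul_of_nonneg_left hhead ht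
  nlinarith

/-! ### mean value bound for f' -/

lemma slope_bound (f' f'' : ℝ → ℝ)
    (hd2 : ∀ t > (0 : ℝ), HasDerivAt f' (f'' t) t)
    (hpos : ∀ t > (0 : ℝ), 0 < f'' t)
    (hdec : AntitoneOn f'' (Set.Ioi 0))
    (m a b : ℝ) (hm : 0 < m) (hma : m ≤ a) (hab : a ≤ b) :
    0 ≤ f' b - f' a ∧ f' b - f' a ≤ f'' m * (b - a) := by
  rcases eq_or_lt_of_le hab with h | h
  · subst h
    simp
  · have ha : 0 < a := lt_of_lt_of_le hm hma
    have hcont : ContinuousOn f' (Set.Icc a b) := by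
      intro y hy
      exact ((hd2 y (lt_of_lt_of_le ha hy.1)).continuousAt).continuousWithinAt
    obtain ⟨c, hc, hceq⟩ := exists_hasDerivAt_eq_slope f' f'' h hcont
      (fun y hy => hd2 y (lt_trans ha hy.1))
    have hca : a < c := hc.1
    have hc0 : 0 < c := lt_trans ha hca
    have hfc : 0 < f'' c := hpos c hc0
    have hcm : f'' c ≤ f'' m := hdec (Set.mem_Ioi.mpr hm) (Set.mem_Ioi.mpr hc0)
      (le_of_lt (lt_of_le_of_lt hma hca))
    have hba : 0 < b - a := by linarith
    have heq : f' b - f' a = f'' c * (b - a) := by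
      field_simp at hceq
      linarith [hceq]
    constructor
    · rw [heq]; positivity
    · rw [heq]
      exact mul_le_mul_of_nonneg_right hcm (le_of_lt hba)
/-! ### derivative of Psi along a line -/

lemma hasDerivAt_lam1_line {n : ℕ} (x d : Fin (n + 2) → ℝ) (t : ℝ) :
    HasDerivAt (fun s => lam1 (x + s • d)) (d 0 - d 1) t := by
  have h : (fun s => lam1 (x + s • d)) = fun s => (x 0 - x 1) + s * (d 0 - d 1) :=
    funext fun s => lam1_line x d s
  rw [h]
  simpa using ((hasDerivAt_id t).mul_const (d 0 - d 1)).const_add (x 0 - x 1)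

lemma hasDerivAt_lam2_line {n : ℕ} (x d : Fin (n + 2) → ℝ) (t : ℝ)
    (hs : HasDerivAt (fun s => Real.sqrt (tQ x d s)) (hpf x d t) t) :
    HasDerivAt (fun s => lam2 (x + s • d)) ((d 0 + d 1) - Real.sqrt 2 * hpf x d t) t := by
  have h : (fun s => lam2 (x + s • d))
      = fun s => ((x 0 + x 1) + s * (d 0 + d 1)) - Real.sqrt 2 * Real.sqrt (tQ x d s) :=
    funext fun s => lam2_line x d s
  rw [h]
  have h1 : HasDerivAt (fun s : ℝ => (x 0 + x 1) + s * (d 0 + d 1)) (d 0 + d 1) t := by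
    simpa using ((hasDerivAt_id t).mul_const (d 0 + d 1)).const_add (x 0 + x 1)
  exact h1.sub (hs.const_mul (Real.sqrt 2))

lemma hasDerivAt_lam4_line {n : ℕ} (x d : Fin (n + 2) → ℝ) (t : ℝ)
    (hs : HasDerivAt (fun s => Real.sqrt (tQ x d s)) (hpf x d t) t) :
    HasDerivAt (fun s => lam4 (x + s • d)) ((d 0 + d 1) + Real.sqrt 2 * hpf x d t) t := by
  have h : (fun s => lam4 (x + s • d))
      = fun s => ((x 0 + x 1) + s * (d 0 + d 1)) + Real.sqrt 2 * Real.sqrt (tQ x d s) :=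
    funext fun s => lam4_line x d s
  rw [h]
  have h1 : HasDerivAt (fun s : ℝ => (x 0 + x 1) + s * (d 0 + d 1)) (d 0 + d 1) t := by
    simpa using ((hasDerivAt_id t).mul_const (d 0 + d 1)).const_add (x 0 + x 1)
  exact h1.add (hs.const_mul (Real.sqrt 2))

lemma lam4_ge_lam2 {n : ℕ} (y : Fin (n + 2) → ℝ) : lam2 y ≤ lam4 y := by
  rw [lam2, lam4]
  have h1 : 0 ≤ Real.sqrt 2 := Real.sqrt_nonneg 2
  have h2 : 0 ≤ _root_.enorm (tl y) := Real.sqrt_nonneg _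
  nlinarith

lemma hasDerivAt_PsiLine (f f' : ℝ → ℝ)
    (hd1 : ∀ t > (0 : ℝ), HasDerivAt f (f' t) t)
    {n : ℕ} (x d : Fin (n + 2) → ℝ) (t : ℝ)
    (hc : tl (x + t • d) ≠ 0 ∨ (tl x = 0 ∧ tl d = 0))
    (h1 : 0 < lam1 (x + t • d)) (h2 : 0 < lam2 (x + t • d)) :
    HasDerivAt (fun s => Psi f (x + s • d)) (Dfun f' x d t) t := by
  obtain ⟨hs, -⟩ := sqrtQ_data x d t hc
  have h4 : 0 < lam4 (x + t • d) := lt_of_lt_of_le h2 (lam4_ge_lam2 _)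
  have hA1 := hasDerivAt_lam1_line x d t
  have hA2 := hasDerivAt_lam2_line x d t hs
  have hA4 := hasDerivAt_lam4_line x d t hs
  have hF1 : HasDerivAt (fun s => f (lam1 (x + s • d)))
      (f' (lam1 (x + t • d)) * (d 0 - d 1)) t := by
    have := (hd1 _ h1).comp t hA1
    simpa [Function.comp_def] using this
  have hF2 : HasDerivAt (fun s => f (lam2 (x + s • d)))
      (f' (lam2 (x + t • d)) * ((d 0 + d 1) - Real.sqrt 2 * hpf x d t)) t := by
    have := (hd1 _ h2).comp t hA2
    simpa [Function.comp_def] using this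
  have hF4 : HasDerivAt (fun s => f (lam4 (x + s • d)))
      (f' (lam4 (x + t • d)) * ((d 0 + d 1) + Real.sqrt 2 * hpf x d t)) t := by
    have := (hd1 _ h4).comp t hA4
    simpa [Function.comp_def] using this
  have hsum := (hF1.fun_add (hF2.const_mul (1/2 : ℝ))).fun_add (hF4.const_mul (1/2 : ℝ))
  have heq : (fun s : ℝ => Psi f (x + s • d)) = fun s : ℝ =>
      f (lam1 (x + s • d)) + (1/2 : ℝ) * f (lam2 (x + s • d))
        + (1/2 : ℝ) * f (lam4 (x + s • d)) := rfl
  rw [heq]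
  refine hsum.congr_deriv ?_
  rw [Dfun]
  ring
/-! ### arithmetic core of the Hessian bound -/

lemma Dbound (sq2 P F1 F2 F4 G2 G4 p q hv hpd K r2 Sd : ℝ)
    (h2' : sq2 * sq2 = 2) (hsq2 : 0 ≤ sq2)
    (hb1 : F1 ≤ P) (hb2 : F2 ≤ P) (hb4 : F4 ≤ P) (hP : 0 < P)
    (hsl0 : 0 ≤ G4 - G2) (hsl1 : G4 - G2 ≤ P * (2 * sq2 * K)) (hnn : 0 ≤ hpd)
    (hrel : hpd * K = r2 - hv ^ 2) (hsplit : Sd = p ^ 2 + q ^ 2 + r2) :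
    F1 * (p - q) * (p - q)
      + ((1/2) * (F2 * ((p + q) - sq2 * hv)) * ((p + q) - sq2 * hv)
        + (1/2) * G2 * -(sq2 * hpd))
      + ((1/2) * (F4 * ((p + q) + sq2 * hv)) * ((p + q) + sq2 * hv)
        + (1/2) * G4 * (sq2 * hpd))
      ≤ 2 * Sd * P := by
  have t1 : F1 * (p - q) * (p - q) ≤ P * ((p - q) * (p - q)) := by
    nlinarith [sq_nonneg (p - q)]
  have t2 : (1/2) * (F2 * ((p + q) - sq2 * hv)) * ((p + q) - sq2 * hv)
      ≤ (1/2) * P * ((p + q) - sq2 * hv) ^ 2 := by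
    nlinarith [sq_nonneg ((p + q) - sq2 * hv)]
  have t4 : (1/2) * (F4 * ((p + q) + sq2 * hv)) * ((p + q) + sq2 * hv)
      ≤ (1/2) * P * ((p + q) + sq2 * hv) ^ 2 := by
    nlinarith [sq_nonneg ((p + q) + sq2 * hv)]
  have tT : (1/2) * G2 * -(sq2 * hpd) + (1/2) * G4 * (sq2 * hpd)
      ≤ 2 * P * (r2 - hv ^ 2) := by
    have e1 : (1/2) * G2 * -(sq2 * hpd) + (1/2) * G4 * (sq2 * hpd)
        = (1/2) * sq2 * hpd * (G4 - G2) := by ring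
    rw [e1]
    have hc1 : 0 ≤ (1/2) * sq2 * hpd := by positivity
    calc (1/2) * sq2 * hpd * (G4 - G2) ≤ (1/2) * sq2 * hpd * (P * (2 * sq2 * K)) :=
          mul_le_mul_of_nonneg_left hsl1 hc1
      _ = P * (hpd * K) * (sq2 * sq2) := by ring
      _ = 2 * P * (r2 - hv ^ 2) := by rw [hrel, h2']; ring
  have hident : P * ((p - q) * (p - q)) + (1/2) * P * ((p + q) - sq2 * hv) ^ 2
      + (1/2) * P * ((p + q) + sq2 * hv) ^ 2 + 2 * P * (r2 - hv ^ 2)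
      = 2 * Sd * P := by
    rw [hsplit]
    linear_combination P * hv ^ 2 * h2'
  linarith

/-! ### derivative of Dfun along with the Hessian bound -/

lemma keyD (f' f'' : ℝ → ℝ)
    (hd2 : ∀ t > (0 : ℝ), HasDerivAt f' (f'' t) t)
    (hpos : ∀ t > (0 : ℝ), 0 < f'' t)
    (hdec : AntitoneOn f'' (Set.Ioi 0))
    {n : ℕ} (x d : Fin (n + 2) → ℝ) (t : ℝ)
    (hc : tl (x + t • d) ≠ 0 ∨ (tl x = 0 ∧ tl d = 0))
    (μ : ℝ) (hμ0 : 0 < μ)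
    (hμ1 : μ ≤ lam1 (x + t • d)) (hμ2 : μ ≤ lam2 (x + t • d)) :
    ∃ D', HasDerivAt (Dfun f' x d) D' t ∧ D' ≤ 2 * (∑ i, d i ^ 2) * f'' μ := by
  obtain ⟨hs, hpd, Hhp, hrel, hnn⟩ := sqrtQ_data x d t hc
  have h1 : 0 < lam1 (x + t • d) := lt_of_lt_of_le hμ0 hμ1
  have h2 : 0 < lam2 (x + t • d) := lt_of_lt_of_le hμ0 hμ2
  have h4 : 0 < lam4 (x + t • d) := lt_of_lt_of_le h2 (lam4_ge_lam2 _)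
  have hμ4 : μ ≤ lam4 (x + t • d) := le_trans hμ2 (lam4_ge_lam2 _)
  have hK0 : 0 ≤ Real.sqrt (tQ x d t) := Real.sqrt_nonneg _
  have hl42 : lam4 (x + t • d) - lam2 (x + t • d) = 2 * Real.sqrt 2 * Real.sqrt (tQ x d t) := by
    rw [lam2_line, lam4_line]; ring
  have hA1 := hasDerivAt_lam1_line x d t
  have hA2 := hasDerivAt_lam2_line x d t hs
  have hA4 := hasDerivAt_lam4_line x d t hs
  have hF1 : HasDerivAt (fun s => f' (lam1 (x + s • d)))
      (f'' (lam1 (x + t • d)) * (d 0 - d 1)) t := by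
    have := (hd2 _ h1).comp t hA1
    simpa [Function.comp_def] using this
  have hF2 : HasDerivAt (fun s => f' (lam2 (x + s • d)))
      (f'' (lam2 (x + t • d)) * ((d 0 + d 1) - Real.sqrt 2 * hpf x d t)) t := by
    have := (hd2 _ h2).comp t hA2
    simpa [Function.comp_def] using this
  have hF4 : HasDerivAt (fun s => f' (lam4 (x + s • d)))
      (f'' (lam4 (x + t • d)) * ((d 0 + d 1) + Real.sqrt 2 * hpf x d t)) t := by
    have := (hd2 _ h4).comp t hA4
    simpa [Function.comp_def] using this
  have hW2 : HasDerivAt (fun s : ℝ => (d 0 + d 1) - Real.sqrt 2 * hpf x d s)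
      (-(Real.sqrt 2 * hpd)) t := (Hhp.const_mul (Real.sqrt 2)).const_sub (d 0 + d 1)
  have hW4 : HasDerivAt (fun s : ℝ => (d 0 + d 1) + Real.sqrt 2 * hpf x d s)
      (Real.sqrt 2 * hpd) t := (Hhp.const_mul (Real.sqrt 2)).const_add (d 0 + d 1)
  have hT1 : HasDerivAt (fun s => f' (lam1 (x + s • d)) * (d 0 - d 1))
      (f'' (lam1 (x + t • d)) * (d 0 - d 1) * (d 0 - d 1)) t := hF1.mul_const _
  have hT2 := (hF2.const_mul (1/2 : ℝ)).mul hW2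
  have hT4 := (hF4.const_mul (1/2 : ℝ)).mul hW4
  have hD := (hT1.add hT2).add hT4
  refine ⟨_, hD, ?_⟩
  obtain ⟨hsl0, hsl1⟩ := slope_bound f' f'' hd2 hpos hdec μ (lam2 (x + t • d))
    (lam4 (x + t • d)) hμ0 hμ2 (lam4_ge_lam2 _)
  rw [hl42] at hsl1
  have hval := Dbound (Real.sqrt 2) (f'' μ) (f'' (lam1 (x + t • d))) (f'' (lam2 (x + t • d)))
    (f'' (lam4 (x + t • d))) (f' (lam2 (x + t • d))) (f' (lam4 (x + t • d)))
    (d 0) (d 1) (hpf x d t) hpd (Real.sqrt (tQ x d t)) (r2v d) (∑ i, d i ^ 2)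
    (Real.mul_self_sqrt (by norm_num)) (Real.sqrt_nonneg 2)
    (hdec (Set.mem_Ioi.mpr hμ0) (Set.mem_Ioi.mpr h1) hμ1)
    (hdec (Set.mem_Ioi.mpr hμ0) (Set.mem_Ioi.mpr h2) hμ2)
    (hdec (Set.mem_Ioi.mpr hμ0) (Set.mem_Ioi.mpr h4) hμ4)
    (hpos μ hμ0) hsl0 hsl1 hnn hrel (sum_sq_split d)
  calc f'' (lam1 (x + t • d)) * (d 0 - d 1) * (d 0 - d 1)
      + ((1/2 : ℝ) * (f'' (lam2 (x + t • d)) * ((d 0 + d 1) - Real.sqrt 2 * hpf x d t))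
          * ((d 0 + d 1) - Real.sqrt 2 * hpf x d t)
        + (1/2 : ℝ) * f' (lam2 (x + t • d)) * -(Real.sqrt 2 * hpd))
      + ((1/2 : ℝ) * (f'' (lam4 (x + t • d)) * ((d 0 + d 1) + Real.sqrt 2 * hpf x d t))
          * ((d 0 + d 1) + Real.sqrt 2 * hpf x d t)
        + (1/2 : ℝ) * f' (lam4 (x + t • d)) * (Real.sqrt 2 * hpd))
      ≤ 2 * (∑ i, d i ^ 2) * f'' μ := hval
/-! ### the value of G at 0 -/

lemma enorm_sq {n : ℕ} (y : Fin n → ℝ) : (_root_.enorm y) ^ 2 = ∑ i, y i ^ 2 :=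
  Real.sq_sqrt (Finset.sum_nonneg fun _ _ => sq_nonneg _)

lemma blockG0 (f' : ℝ → ℝ) {n : ℕ} (x dxx dss : Fin (n + 2) → ℝ)
    (hsum : dxx + dss = -specVec f' x) :
    (1/2) * Dfun f' x dxx 0 + (1/2) * Dfun f' x dss 0 = -(_root_.enorm (specVec f' x)) ^ 2 := by
  set A := f' (lam1 x) with hA
  set B := f' (lam2 x) with hB
  set C := f' (lam4 x) with hC
  set e := specVec f' x with he
  set H := _root_.enorm (tl x) with hHdef
  have hDfun : ∀ d : Fin (n+2) → ℝ, Dfun f' x d 0 = A * (d 0 - d 1)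
      + (1/2) * B * ((d 0 + d 1) - Real.sqrt 2 * hpf x d 0)
      + (1/2) * C * ((d 0 + d 1) + Real.sqrt 2 * hpf x d 0) := by
    intro d
    simp only [Dfun, zero_smul, add_zero, hA, hB, hC]
  have htR0 : ∀ d : Fin (n+2) → ℝ, tR x d 0 = ∑ i, tl x i * tl d i := by
    intro d; rw [tR]; apply Finset.sum_congr rfl; intro i _; ring
  have htQ0 : ∀ d : Fin (n+2) → ℝ, tQ x d 0 = ∑ i, (tl x i) ^ 2 := by
    intro d; rw [tQ]; apply Finset.sum_congr rfl; intro i _; ring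
  have hKH : ∀ d : Fin (n+2) → ℝ, Real.sqrt (tQ x d 0) = H := by
    intro d; rw [htQ0]; rfl
  have hpf0 : ∀ d : Fin (n+2) → ℝ, hpf x d 0 = (∑ i, tl x i * tl d i) / H := by
    intro d; rw [hpf, htR0, hKH]
  have he0 : e 0 = (1/2) * A + (1/4) * B + (1/4) * C := by
    rw [he, specVec]; simp [hA, hB, hC]
  have he1 : e 1 = -(1/2) * A + (1/4) * B + (1/4) * C := by
    rw [he, specVec]; simp [hA, hB, hC]
  have htle : tl e = fun i => (C - B) * tl x i / (2 * Real.sqrt 2 * H) := by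
    funext i
    by_cases hi : 2 ≤ (i : ℕ)
    · have hi0 : ¬((i : ℕ) = 0) := by omega
      have hi1 : ¬((i : ℕ) = 1) := by omega
      simp only [tl, he, specVec, if_pos hi, if_neg hi0, if_neg hi1, hHdef, hB, hC]
    · simp only [tl, if_neg hi]
      rw [mul_zero, zero_div]
  have hs0 : dss 0 = -(e 0) - dxx 0 := by
    have := congrFun hsum 0
    simp only [Pi.add_apply, Pi.neg_apply] at this
    linarith
  have hs1 : dss 1 = -(e 1) - dxx 1 := by
    have := congrFun hsum 1
    simp only [Pi.add_apply, Pi.neg_apply] at this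
    linarith
  have hsumtl : ∀ i, tl dxx i + tl dss i = -(tl e i) := by
    intro i
    have h := congrFun (congrArg tl hsum) i
    rw [tl_add, tl_neg] at h
    simpa using h
  have hrhs : (_root_.enorm e) ^ 2 = e 0 ^ 2 + e 1 ^ 2 + ∑ i, (tl e i) ^ 2 := by
    rw [enorm_sq]
    have := sum_sq_split e
    rw [this]; rfl
  by_cases hx : tl x = 0
  · -- degenerate tail
    have hz : ∀ d : Fin (n+2) → ℝ, hpf x d 0 = 0 := by
      intro d
      rw [hpf0]
      have : ∑ i, tl x i * tl d i = 0 :=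
        Finset.sum_eq_zero fun i _ => by rw [hx]; simp
      rw [this, zero_div]
    have htlez : ∑ i, (tl e i) ^ 2 = 0 := by
      apply Finset.sum_eq_zero
      intro i _
      rw [htle, hx]
      simp
    rw [hDfun, hDfun, hz, hz, hrhs, htlez, hs0, hs1, he0, he1]
    ring
  · -- nondegenerate tail
    have hHpos : 0 < H := by
      rw [hHdef, _root_.enorm, Real.sqrt_pos]
      have h0 : tl (x + (0:ℝ) • dxx) ≠ 0 := by simpa using hx
      have := tQ_pos_of_ne x dxx 0 h0
      rw [htQ0] at this
      exact this
    have hHne : H ≠ 0 := ne_of_gt hHpos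
    have h2' : Real.sqrt 2 * Real.sqrt 2 = 2 := Real.mul_self_sqrt (by norm_num)
    have hs2ne : Real.sqrt 2 ≠ 0 := by
      intro h; rw [h] at h2'; norm_num at h2'
    have hHsq : ∑ i, (tl x i) ^ 2 = H ^ 2 := by
      rw [hHdef, enorm_sq]
    have hSe : ∑ i, tl x i * tl e i = (C - B) / (2 * Real.sqrt 2 * H) * H ^ 2 := by
      rw [htle]
      have : ∀ i : Fin (n+2), tl x i * ((C - B) * tl x i / (2 * Real.sqrt 2 * H))
          = (C - B) / (2 * Real.sqrt 2 * H) * (tl x i) ^ 2 := by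
        intro i; ring
      rw [Finset.sum_congr rfl (fun i _ => this i), ← Finset.mul_sum, hHsq]
    have htlesq : ∑ i, (tl e i) ^ 2 = (C - B) ^ 2 / 8 := by
      rw [htle]
      have : ∀ i : Fin (n+2), ((C - B) * tl x i / (2 * Real.sqrt 2 * H)) ^ 2
          = ((C - B) / (2 * Real.sqrt 2 * H)) ^ 2 * (tl x i) ^ 2 := by
        intro i; ring
      rw [Finset.sum_congr rfl (fun i _ => this i), ← Finset.mul_sum, hHsq]
      have h2sq : Real.sqrt 2 ^ 2 = 2 := Real.sq_sqrt (by norm_num)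
      field_simp
      linear_combination (-4 * (C - B) ^ 2) * h2sq
    have hps_eq : hpf x dss 0 = -((C - B) / (2 * Real.sqrt 2)) - hpf x dxx 0 := by
      rw [hpf0, hpf0]
      have hRs : ∑ i, tl x i * tl dss i = -((C - B) / (2 * Real.sqrt 2 * H) * H ^ 2)
          - ∑ i, tl x i * tl dxx i := by
        have h1 : (∑ i, tl x i * tl dxx i) + (∑ i, tl x i * tl dss i)
            = -∑ i, tl x i * tl e i := by
          rw [← Finset.sum_add_distrib, ← Finset.sum_neg_distrib]
          apply Finset.sum_congr rfl
          intro i _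
          linear_combination (tl x i) * hsumtl i
        rw [hSe] at h1
        linarith
      rw [hRs]
      field_simp
    rw [hDfun, hDfun, hps_eq, hrhs, htlesq, hs0, hs1, he0, he1]
    field_simp
    ring
/-! ### main theorem -/

set_option maxHeartbeats 1600000 in
theorem stmt15' (f f' f'' : ℝ → ℝ)
    (hd1 : ∀ t > (0 : ℝ), HasDerivAt f (f' t) t)
    (hd2 : ∀ t > (0 : ℝ), HasDerivAt f' (f'' t) t)
    (hcont : ContinuousOn f'' (Set.Ioi 0))
    (hpos : ∀ t > (0 : ℝ), 0 < f'' t)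
    (hdec : AntitoneOn f'' (Set.Ioi 0))
    (N : ℕ) (hN : 1 ≤ N) (nf : Fin N → ℕ)
    (v dx ds : ∀ j : Fin N, Fin (nf j + 2) → ℝ)
    (hv : ∀ j, inConeInt (v j))
    (horth : ∑ j, dotp (dx j) (ds j) = 0)
    (hdir : ∀ j, dx j + ds j = -specVec f' (v j))
    (α : ℝ) (hα : 0 ≤ α)
    (hlm : 0 < lamMin v - 2 * Real.sqrt 2 * α * deltaBlk f' v)
    (htail : ∀ ξ ∈ Set.Icc (0 : ℝ) α, ∀ j, 1 ≤ nf j →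
      tl (v j + ξ • dx j) ≠ 0 ∧ tl (v j + ξ • ds j) ≠ 0)
    (hstep : -f' (lamMin v - 2 * Real.sqrt 2 * α * deltaBlk f' v) + f' (lamMin v)
      ≤ 2 * Real.sqrt 2 * deltaBlk f' v) :
    let f1 : ℝ → ℝ := fun t =>
      (∑ j, ((1 / 2) * Psi f (v j + t • dx j) + (1 / 2) * Psi f (v j + t • ds j)))
        - ∑ j, Psi f (v j)
    DifferentiableAt ℝ f1 α ∧ deriv f1 α ≤ 0 := by
  intro f1
  have hs2 : Real.sqrt 2 * Real.sqrt 2 = 2 := Real.mul_self_sqrt (by norm_num)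
  have hs20 : 0 ≤ Real.sqrt 2 := Real.sqrt_nonneg 2
  have hs2ne : Real.sqrt 2 ≠ 0 := by intro h; rw [h] at hs2; norm_num at hs2
  set δ := deltaBlk f' v with hδ
  set lm := lamMin v with hlmdef
  have hδ0 : 0 ≤ δ := by
    rw [hδ, deltaBlk]
    exact mul_nonneg (one_div_nonneg.mpr (Real.sqrt_nonneg 2)) (Real.sqrt_nonneg _)
  set S := ∑ j, (_root_.enorm (specVec f' (v j))) ^ 2 with hS
  have hS0 : 0 ≤ S := Finset.sum_nonneg fun _ _ => sq_nonneg _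
  have hSδ : S = 2 * δ ^ 2 := by
    have h1 : δ ^ 2 = (1 / Real.sqrt 2) ^ 2 * S := by
      rw [hδ, deltaBlk, mul_pow, Real.sq_sqrt hS0, hS]
    have h2 : (1 / Real.sqrt 2 : ℝ) ^ 2 = 1 / 2 := by
      rw [div_pow, one_pow, Real.sq_sqrt (by norm_num : (0:ℝ) ≤ 2)]
    rw [h2] at h1
    linarith
  have hsum2 : ∑ j, ((∑ i, (dx j i) ^ 2) + (∑ i, (ds j i) ^ 2)) = S := by
    have hper : ∀ j, (∑ i, (dx j i) ^ 2) + (∑ i, (ds j i) ^ 2)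
        = (_root_.enorm (specVec f' (v j))) ^ 2 - 2 * dotp (dx j) (ds j) := by
      intro j
      have h1 : (_root_.enorm (specVec f' (v j))) ^ 2 = ∑ i, ((dx j + ds j) i) ^ 2 := by
        rw [enorm_sq]
        apply Finset.sum_congr rfl
        intro i _
        rw [congrFun (hdir j) i, Pi.neg_apply, neg_sq]
      have h2 : ∑ i, ((dx j + ds j) i) ^ 2
          = (∑ i, (dx j i) ^ 2) + 2 * dotp (dx j) (ds j) + ∑ i, (ds j i) ^ 2 := by
        rw [dotp, Finset.mul_sum, ← Finset.sum_add_distrib, ← Finset.sum_add_distrib]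
        apply Finset.sum_congr rfl
        intro i _
        simp only [Pi.add_apply]
        ring
      rw [h1, h2]
      ring
    rw [Finset.sum_congr rfl (fun j _ => hper j), Finset.sum_sub_distrib, ← Finset.mul_sum,
      horth, hS]
    ring
  have hdx2 : ∀ j, (∑ i, (dx j i) ^ 2) ≤ 2 * δ ^ 2 := by
    intro j
    have h1 : (∑ i, (dx j i) ^ 2) + (∑ i, (ds j i) ^ 2) ≤ S := by
      rw [← hsum2]
      exact Finset.single_le_sum
        (f := fun j => (∑ i, (dx j i) ^ 2) + (∑ i, (ds j i) ^ 2))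
        (fun j _ => by positivity) (Finset.mem_univ j)
    have h2 : (0:ℝ) ≤ ∑ i, (ds j i) ^ 2 := Finset.sum_nonneg fun _ _ => sq_nonneg _
    linarith [hSδ]
  have hds2 : ∀ j, (∑ i, (ds j i) ^ 2) ≤ 2 * δ ^ 2 := by
    intro j
    have h1 : (∑ i, (dx j i) ^ 2) + (∑ i, (ds j i) ^ 2) ≤ S := by
      rw [← hsum2]
      exact Finset.single_le_sum
        (f := fun j => (∑ i, (dx j i) ^ 2) + (∑ i, (ds j i) ^ 2))
        (fun j _ => by positivity) (Finset.mem_univ j)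
    have h2 : (0:ℝ) ≤ ∑ i, (dx j i) ^ 2 := Finset.sum_nonneg fun _ _ => sq_nonneg _
    linarith [hSδ]
  set c := 2 * Real.sqrt 2 * δ with hc
  have hc0 : 0 ≤ c := by rw [hc]; positivity
  have hcα : lm - c * α = lm - 2 * Real.sqrt 2 * α * δ := by rw [hc]; ring
  have hlmα : 0 < lm - c * α := by rw [hcα]; exact hlm
  have hμpos : ∀ ξ ∈ Set.Icc (0:ℝ) α, 0 < lm - c * ξ := by
    intro ξ hξ
    have : c * ξ ≤ c * α := mul_le_mul_of_nonneg_left hξ.2 hc0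
    linarith
  have hlmle : ∀ j, lm ≤ lam1 (v j) ∧ lm ≤ lam2 (v j) := by
    intro j
    have hb : BddBelow (Set.range fun j => min (lam1 (v j)) (lam2 (v j))) :=
      (Set.finite_range _).bddBelow
    have h := ciInf_le hb j
    rw [hlmdef, lamMin]
    exact ⟨le_trans (le_trans h (min_le_left _ _)) (le_refl _),
      le_trans (le_trans h (min_le_right _ _)) (le_refl _)⟩
  have hlow : ∀ ξ ∈ Set.Icc (0:ℝ) α, ∀ j, ∀ d : Fin (nf j + 2) → ℝ,
      (∑ i, d i ^ 2) ≤ 2 * δ ^ 2 →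
      lm - c * ξ ≤ lam1 (v j + ξ • d) ∧ lm - c * ξ ≤ lam2 (v j + ξ • d) := by
    intro ξ hξ j d hd
    have hE : Real.sqrt (∑ i, d i ^ 2) ≤ Real.sqrt 2 * δ := by
      calc Real.sqrt (∑ i, d i ^ 2) ≤ Real.sqrt (2 * δ ^ 2) := Real.sqrt_le_sqrt hd
        _ = Real.sqrt 2 * δ := by
            rw [Real.sqrt_mul (by norm_num : (0:ℝ) ≤ 2), Real.sqrt_sq hδ0]
    have h2ξ : 2 * ξ * Real.sqrt (∑ i, d i ^ 2) ≤ c * ξ := by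
      have h := mul_le_mul_of_nonneg_left hE (by linarith [hξ.1] : (0:ℝ) ≤ 2 * ξ)
      rw [hc]; nlinarith [hξ.1]
    constructor
    · have ha := lam1_lower (v j) d ξ hξ.1
      have hb := (hlmle j).1
      linarith
    · have ha := lam2_lower (v j) d ξ hξ.1
      have hb := (hlmle j).2
      linarith
  have hcx : ∀ ξ ∈ Set.Icc (0:ℝ) α, ∀ j,
      tl (v j + ξ • dx j) ≠ 0 ∨ (tl (v j) = 0 ∧ tl (dx j) = 0) := by
    intro ξ hξ j
    by_cases h1 : 1 ≤ nf j
    · exact Or.inl (htail ξ hξ j h1).1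
    · right
      have h0 : nf j = 0 := by omega
      exact ⟨tl_zero_of_base h0 _, tl_zero_of_base h0 _⟩
  have hcs : ∀ ξ ∈ Set.Icc (0:ℝ) α, ∀ j,
      tl (v j + ξ • ds j) ≠ 0 ∨ (tl (v j) = 0 ∧ tl (ds j) = 0) := by
    intro ξ hξ j
    by_cases h1 : 1 ≤ nf j
    · exact Or.inl (htail ξ hξ j h1).2
    · right
      have h0 : nf j = 0 := by omega
      exact ⟨tl_zero_of_base h0 _, tl_zero_of_base h0 _⟩
  set G := fun ξ : ℝ =>
    ∑ j, ((1/2) * Dfun f' (v j) (dx j) ξ + (1/2) * Dfun f' (v j) (ds j) ξ) with hG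
  -- derivative of f1 on the segment
  have hf1d : ∀ ξ ∈ Set.Icc (0:ℝ) α, HasDerivAt f1 (G ξ) ξ := by
    intro ξ hξ
    have hterm : ∀ j : Fin N, HasDerivAt
        (fun t : ℝ => (1/2) * Psi f (v j + t • dx j) + (1/2) * Psi f (v j + t • ds j))
        ((1/2) * Dfun f' (v j) (dx j) ξ + (1/2) * Dfun f' (v j) (ds j) ξ) ξ := by
      intro j
      have hx1 := hlow ξ hξ j (dx j) (hdx2 j)
      have hs1 := hlow ξ hξ j (ds j) (hds2 j)
      have hμ := hμpos ξ hξ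
      have hPx := hasDerivAt_PsiLine f f' hd1 (v j) (dx j) ξ (hcx ξ hξ j)
        (lt_of_lt_of_le hμ hx1.1) (lt_of_lt_of_le hμ hx1.2)
      have hPs := hasDerivAt_PsiLine f f' hd1 (v j) (ds j) ξ (hcs ξ hξ j)
        (lt_of_lt_of_le hμ hs1.1) (lt_of_lt_of_le hμ hs1.2)
      exact (hPx.const_mul (1/2 : ℝ)).add (hPs.const_mul (1/2 : ℝ))
    have hsum := HasDerivAt.fun_sum (fun j (_ : j ∈ Finset.univ) => hterm j)
    exact hsum.sub_const (∑ j, Psi f (v j))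
  have hdf1 : HasDerivAt f1 (G α) α := hf1d α ⟨hα, le_refl α⟩
  -- derivative of G with bound
  have hGd : ∀ ξ ∈ Set.Icc (0:ℝ) α, ∃ D', HasDerivAt G D' ξ
      ∧ D' ≤ 2 * δ ^ 2 * f'' (lm - c * ξ) := by
    intro ξ hξ
    have hjd : ∀ j : Fin N, ∃ Dj, HasDerivAt
        (fun t : ℝ => (1/2) * Dfun f' (v j) (dx j) t + (1/2) * Dfun f' (v j) (ds j) t) Dj ξ
        ∧ Dj ≤ ((∑ i, (dx j i) ^ 2) + (∑ i, (ds j i) ^ 2)) * f'' (lm - c * ξ) := by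
      intro j
      have hx1 := hlow ξ hξ j (dx j) (hdx2 j)
      have hs1 := hlow ξ hξ j (ds j) (hds2 j)
      obtain ⟨Dx, hDx, hDxle⟩ := keyD f' f'' hd2 hpos hdec (v j) (dx j) ξ (hcx ξ hξ j)
        (lm - c * ξ) (hμpos ξ hξ) hx1.1 hx1.2
      obtain ⟨Ds, hDs, hDsle⟩ := keyD f' f'' hd2 hpos hdec (v j) (ds j) ξ (hcs ξ hξ j)
        (lm - c * ξ) (hμpos ξ hξ) hs1.1 hs1.2
      exact ⟨(1/2) * Dx + (1/2) * Ds,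
        (hDx.const_mul (1/2 : ℝ)).add (hDs.const_mul (1/2 : ℝ)), by linarith⟩
    choose Dj hDj hDjle using hjd
    refine ⟨∑ j, Dj j, HasDerivAt.fun_sum (fun j _ => hDj j), ?_⟩
    calc ∑ j, Dj j
        ≤ ∑ j, ((∑ i, (dx j i) ^ 2) + (∑ i, (ds j i) ^ 2)) * f'' (lm - c * ξ) :=
          Finset.sum_le_sum (fun j _ => hDjle j)
      _ = S * f'' (lm - c * ξ) := by rw [← Finset.sum_mul, hsum2]
      _ = 2 * δ ^ 2 * f'' (lm - c * ξ) := by rw [hSδ]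
  -- G at 0
  have hG0 : G 0 = -(2 * δ ^ 2) := by
    have hbl : ∀ j : Fin N, (1/2) * Dfun f' (v j) (dx j) 0 + (1/2) * Dfun f' (v j) (ds j) 0
        = -(_root_.enorm (specVec f' (v j))) ^ 2 :=
      fun j => blockG0 f' (v j) (dx j) (ds j) (hdir j)
    have : G 0 = ∑ j, -(_root_.enorm (specVec f' (v j))) ^ 2 := by
      rw [hG]
      exact Finset.sum_congr rfl (fun j _ => hbl j)
    rw [this, Finset.sum_neg_distrib, ← hS, hSδ]
  -- the majorant function
  set Bf := fun ξ : ℝ => δ / Real.sqrt 2 * (f' lm - f' (lm - c * ξ)) - 2 * δ ^ 2 with hBf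
  have hBd : ∀ ξ ∈ Set.Icc (0:ℝ) α, HasDerivAt Bf (2 * δ ^ 2 * f'' (lm - c * ξ)) ξ := by
    intro ξ hξ
    have hin : HasDerivAt (fun s : ℝ => lm - c * s) (-c) ξ := by
      simpa using ((hasDerivAt_id ξ).const_mul c).const_sub lm
    have hout : HasDerivAt (fun s : ℝ => f' (lm - c * s)) (f'' (lm - c * ξ) * -c) ξ := by
      have := (hd2 _ (hμpos ξ hξ)).comp ξ hin
      simpa [Function.comp_def] using this
    have h1 : HasDerivAt (fun s : ℝ => f' lm - f' (lm - c * s))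
        (-(f'' (lm - c * ξ) * -c)) ξ := hout.const_sub (f' lm)
    have h2 := (h1.const_mul (δ / Real.sqrt 2)).sub_const (2 * δ ^ 2)
    have hcd : δ * c / Real.sqrt 2 = 2 * δ ^ 2 := by
      rw [hc]; field_simp
    have heq : δ / Real.sqrt 2 * -(f'' (lm - c * ξ) * -c) = 2 * δ ^ 2 * f'' (lm - c * ξ) := by
      rw [← hcd]; ring
    rw [heq] at h2
    exact h2
  -- comparison
  have hmono : MonotoneOn (fun ξ => Bf ξ - G ξ) (Set.Icc 0 α) := by
    apply monotoneOn_of_deriv_nonneg (convex_Icc 0 α)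
    · intro ξ hξ
      obtain ⟨D, hD, _⟩ := hGd ξ hξ
      exact ((hBd ξ hξ).sub hD).continuousAt.continuousWithinAt
    · intro ξ hξ
      rw [interior_Icc] at hξ
      obtain ⟨D, hD, _⟩ := hGd ξ (Set.mem_Icc_of_Ioo hξ)
      exact ((hBd ξ (Set.mem_Icc_of_Ioo hξ)).sub hD).differentiableAt.differentiableWithinAt
    · intro ξ hξ
      rw [interior_Icc] at hξ
      obtain ⟨D, hD, hDle⟩ := hGd ξ (Set.mem_Icc_of_Ioo hξ)
      have hder := (hBd ξ (Set.mem_Icc_of_Ioo hξ)).fun_sub hD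
      rw [hder.deriv]
      linarith
  have hWα := hmono (Set.left_mem_Icc.mpr hα) (Set.right_mem_Icc.mpr hα) hα
  have hBf0 : Bf 0 = -(2 * δ ^ 2) := by
    rw [hBf]
    simp
  have hGα : G α ≤ Bf α := by
    have h0 : Bf 0 - G 0 = 0 := by rw [hBf0, hG0]; ring
    simp only [] at hWα
    linarith [hWα]
  have hBα : Bf α ≤ 0 := by
    have hstep' : f' lm - f' (lm - c * α) ≤ 2 * Real.sqrt 2 * δ := by
      rw [hcα]
      linarith [hstep]
    have h1 : δ / Real.sqrt 2 * (f' lm - f' (lm - c * α))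
        ≤ δ / Real.sqrt 2 * (2 * Real.sqrt 2 * δ) :=
      mul_le_mul_of_nonneg_left hstep' (by positivity)
    have h2 : δ / Real.sqrt 2 * (2 * Real.sqrt 2 * δ) = 2 * δ ^ 2 := by
      field_simp
    rw [hBf]
    simp only []
    linarith
  exact ⟨hdf1.differentiableAt, by rw [hdf1.deriv]; linarith⟩

/-- under the same setting as Statement 14, with nonzero tails on
all of `[0, α]` and the additional hypothesis
`-ψ'(λ_min(v) - 2√2 α δ(v)) + ψ'(λ_min(v)) ≤ 2√2 δ(v)`,
the function `f₁` is differentiable at `α` with `f₁'(α) ≤ 0`. -/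
theorem stmt15 (f f' f'' : ℝ → ℝ)
    (hd1 : ∀ t > (0 : ℝ), HasDerivAt f (f' t) t)
    (hd2 : ∀ t > (0 : ℝ), HasDerivAt f' (f'' t) t)
    (hcont : ContinuousOn f'' (Set.Ioi 0))
    (hpos : ∀ t > (0 : ℝ), 0 < f'' t)
    (hdec : AntitoneOn f'' (Set.Ioi 0))
    (N : ℕ) (hN : 1 ≤ N) (nf : Fin N → ℕ)
    (v dx ds : ∀ j : Fin N, Fin (nf j + 2) → ℝ)
    (hv : ∀ j, inConeInt (v j))
    (horth : ∑ j, dotp (dx j) (ds j) = 0)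
    (hdir : ∀ j, dx j + ds j = -specVec f' (v j))
    (α : ℝ) (hα : 0 ≤ α)
    (hlm : 0 < lamMin v - 2 * Real.sqrt 2 * α * deltaBlk f' v)
    (htail : ∀ ξ ∈ Set.Icc (0 : ℝ) α, ∀ j, 1 ≤ nf j →
      tl (v j + ξ • dx j) ≠ 0 ∧ tl (v j + ξ • ds j) ≠ 0)
    (hstep : -f' (lamMin v - 2 * Real.sqrt 2 * α * deltaBlk f' v) + f' (lamMin v)
      ≤ 2 * Real.sqrt 2 * deltaBlk f' v) :
    let f1 : ℝ → ℝ := fun t =>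
      (∑ j, ((1 / 2) * Psi f (v j + t • dx j) + (1 / 2) * Psi f (v j + t • ds j)))
        - ∑ j, Psi f (v j)
    DifferentiableAt ℝ f1 α ∧ deriv f1 α ≤ 0 :=
  stmt15' f f' f'' hd1 hd2 hcont hpos hdec N hN nf v dx ds hv horth hdir α hα hlm htail hstep

end
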